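/- Suppose in addition that A and D are invertible in Mat_N(𝒜). Then the pair A′ := D, D′ := D A^{−1} D^{−1} again satisfies the defining relations of the quantized loop edge algebra: R₂₁ A′₁ R A′₂ = A′₂ R₂₁ A′₁ R; R₂₁ D′₁ R D′₂ = D′₂ R₂₁ D′₁ R; and R₂₁ D′₁ R A′₂ = A′₂ R₂₁ D′₁ R₂₁^{−1}. (This is the content of the q-Fourier transform ℱ: 𝒟_q(e)° → 𝒟_q(e)°, A ↦ D, D ↦ D A^{−1} D^{−1}, for a loop edge.) -/

import Mathlib

open Matrix Kronecker

noncomputable section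

/-- Coefficient matrix of the R-matrix `R[N]` on `k^N ⊗ k^N`: the entry in
row `(i,j)`, column `(s,t)` is `q^{δ_{ij}} δ_{is} δ_{jt} + (q-q⁻¹) θ(i-j) δ_{it} δ_{js}`,
where `θ(x) = 1` if `x > 0` and `0` otherwise. -/
def Rmat (k : Type) [Field k] (q : k) (N : ℕ) :
    Matrix (Fin N × Fin N) (Fin N × Fin N) k :=
  Matrix.of fun p r =>
    (if p.1 = p.2 then q else 1) * (if p = r then 1 else 0)
      + (q - q⁻¹) * ((if p.2 < p.1 then (1 : k) else 0) *
          (if p.1 = r.2 ∧ p.2 = r.1 then 1 else 0))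

/-- The explicit inverse of `R[N]`:
`(R⁻¹)^{ij}_{st} = q^{-δ_{ij}} δ_{is} δ_{jt} - (q-q⁻¹) θ(i-j) δ_{it} δ_{js}`. -/
def RmatInv (k : Type) [Field k] (q : k) (N : ℕ) :
    Matrix (Fin N × Fin N) (Fin N × Fin N) k :=
  Matrix.of fun p r =>
    (if p.1 = p.2 then q⁻¹ else 1) * (if p = r then 1 else 0)
      - (q - q⁻¹) * ((if p.2 < p.1 then (1 : k) else 0) *
          (if p.1 = r.2 ∧ p.2 = r.1 then 1 else 0))

variable (k : Type) [Field k] (𝒜 : Type) [Ring 𝒜] [Algebra k 𝒜]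

/-- `R[N]` regarded as a matrix over the `k`-algebra `𝒜`. -/
def RA (q : k) (N : ℕ) : Matrix (Fin N × Fin N) (Fin N × Fin N) 𝒜 :=
  (Rmat k q N).map (algebraMap k 𝒜)

/-- `R[N]₂₁ := τ ∘ R[N] ∘ τ` regarded as a matrix over `𝒜`. -/
def RA21 (q : k) (N : ℕ) : Matrix (Fin N × Fin N) (Fin N × Fin N) 𝒜 :=
  Matrix.of fun p r => RA k 𝒜 q N (p.2, p.1) (r.2, r.1)

/-- `(R[N])⁻¹` regarded as a matrix over `𝒜`. -/
def RAinv (q : k) (N : ℕ) : Matrix (Fin N × Fin N) (Fin N × Fin N) 𝒜 :=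
  (RmatInv k q N).map (algebraMap k 𝒜)

/-- `(R[N]₂₁)⁻¹ = (R[N]⁻¹)₂₁` regarded as a matrix over `𝒜`. -/
def RAinv21 (q : k) (N : ℕ) : Matrix (Fin N × Fin N) (Fin N × Fin N) 𝒜 :=
  Matrix.of fun p r => RAinv k 𝒜 q N (p.2, p.1) (r.2, r.1)

/-- The flip `τ : k^m ⊗ k^n → k^n ⊗ k^m` as a matrix over `𝒜`. -/
def flipA (m n : ℕ) : Matrix (Fin n × Fin m) (Fin m × Fin n) 𝒜 :=
  Matrix.of fun p r => if p.1 = r.2 ∧ p.2 = r.1 then 1 else 0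

/-- The defining relations (M1), (M2), (M3) of the quantized edge algebra `𝒟_q(e)`
of the Kronecker quiver with tail dimension `n` and head dimension `m`, for an
`n × m` matrix `A` and an `m × n` matrix `D` over `𝒜`:
(M1) `R[n] A₂ A₁ = A₁ A₂ R[m]₂₁`, (M2) `R[m] D₂ D₁ = D₁ D₂ R[n]₂₁`,
(M3) `D₂ (R[n])⁻¹ A₁ = A₁ R[m] D₂ + τ`. -/
def EdgeRel (q : k) {n m : ℕ}
    (A : Matrix (Fin n) (Fin m) 𝒜) (D : Matrix (Fin m) (Fin n) 𝒜) : Prop :=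
  RA k 𝒜 q n * ((1 : Matrix (Fin n) (Fin n) 𝒜) ⊗ₖ A) * (A ⊗ₖ (1 : Matrix (Fin m) (Fin m) 𝒜))
      = (A ⊗ₖ (1 : Matrix (Fin n) (Fin n) 𝒜)) * ((1 : Matrix (Fin m) (Fin m) 𝒜) ⊗ₖ A)
          * RA21 k 𝒜 q m
    ∧ RA k 𝒜 q m * ((1 : Matrix (Fin m) (Fin m) 𝒜) ⊗ₖ D) * (D ⊗ₖ (1 : Matrix (Fin n) (Fin n) 𝒜))
      = (D ⊗ₖ (1 : Matrix (Fin m) (Fin m) 𝒜)) * ((1 : Matrix (Fin n) (Fin n) 𝒜) ⊗ₖ D)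
          * RA21 k 𝒜 q n
    ∧ ((1 : Matrix (Fin n) (Fin n) 𝒜) ⊗ₖ D) * RAinv k 𝒜 q n * (A ⊗ₖ (1 : Matrix (Fin n) (Fin n) 𝒜))
      = (A ⊗ₖ (1 : Matrix (Fin m) (Fin m) 𝒜)) * RA k 𝒜 q m * ((1 : Matrix (Fin m) (Fin m) 𝒜) ⊗ₖ D)
          + flipA 𝒜 m n

/-- The defining relations (L1), (L2), (L3) of the quantized loop edge algebra `𝒟_q(e)`
at a vertex of dimension `N`, with `R := R[N]`:
(L1) `R₂₁ A₁ R A₂ = A₂ R₂₁ A₁ R`, (L2) `R₂₁ D₁ R D₂ = D₂ R₂₁ D₁ R`,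
(L3) `R₂₁ D₁ R A₂ = A₂ R₂₁ D₁ R₂₁⁻¹`. -/
def LoopRel (q : k) {N : ℕ} (A D : Matrix (Fin N) (Fin N) 𝒜) : Prop :=
  RA21 k 𝒜 q N * (A ⊗ₖ (1 : Matrix (Fin N) (Fin N) 𝒜)) * RA k 𝒜 q N
        * ((1 : Matrix (Fin N) (Fin N) 𝒜) ⊗ₖ A)
      = ((1 : Matrix (Fin N) (Fin N) 𝒜) ⊗ₖ A) * RA21 k 𝒜 q N
        * (A ⊗ₖ (1 : Matrix (Fin N) (Fin N) 𝒜)) * RA k 𝒜 q N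
    ∧ RA21 k 𝒜 q N * (D ⊗ₖ (1 : Matrix (Fin N) (Fin N) 𝒜)) * RA k 𝒜 q N
        * ((1 : Matrix (Fin N) (Fin N) 𝒜) ⊗ₖ D)
      = ((1 : Matrix (Fin N) (Fin N) 𝒜) ⊗ₖ D) * RA21 k 𝒜 q N
        * (D ⊗ₖ (1 : Matrix (Fin N) (Fin N) 𝒜)) * RA k 𝒜 q N
    ∧ RA21 k 𝒜 q N * (D ⊗ₖ (1 : Matrix (Fin N) (Fin N) 𝒜)) * RA k 𝒜 q N
        * ((1 : Matrix (Fin N) (Fin N) 𝒜) ⊗ₖ A)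
      = ((1 : Matrix (Fin N) (Fin N) 𝒜) ⊗ₖ A) * RA21 k 𝒜 q N
        * (D ⊗ₖ (1 : Matrix (Fin N) (Fin N) 𝒜)) * RAinv21 k 𝒜 q N

/-!
Write `r, s, a, b, d, e` for `R, R₂₁, A₁, A₂, D₁, D₂`, viewed in the group of units of
`Mat_{N²}(𝒜)`; conjugating (L1)–(L3) by the flip yields the same relations with the two tensor
legs exchanged. The new (L1) is the old (L2). For `d' = d a⁻¹ d⁻¹`, the new (L3) holds because
`d⁻¹` commutes with `r e s` while `a⁻¹` carries `r e s` to `r e r⁻¹`, after which (L2) applies.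
The new (L2) is then reduced, by (L2), (L3) and the new (L3), to the commutation of `d a` with
`r e b s`, which is a chain of the flipped relations and (L3).
-/

section GroupRelations

variable {G : Type*} [Group G] {r s a b d e : G}

theorem commute_mul_of_loop_relations (hL3 : s * d * r * b = b * s * d * s⁻¹)
    (hF1 : r * b * s * a = a * r * b * s) (hF2 : r * e * s * d = d * r * e * s)
    (hF3 : r * e * s * a = a * r * e * r⁻¹) :
    Commute (d * a) (r * e * b * s) :=
  calc d * a * (r * e * b * s)
      _ = d * (a * r * e * r⁻¹) * (r * b * s) := by group
      _ = d * (r * e * s * a) * (r * b * s) := by rw [hF3]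
      _ = d * (r * e * s) * (a * r * b * s) := by group
      _ = d * (r * e * s) * (r * b * s * a) := by rw [hF1]
      _ = d * r * e * s * (r * b * s * a) := by group
      _ = r * e * s * d * (r * b * s * a) := by rw [hF2]
      _ = r * e * (s * d * r * b) * s * a := by group
      _ = r * e * (b * s * d * s⁻¹) * s * a := by rw [hL3]
      _ = r * e * b * s * (d * a) := by group

theorem loop_relation_three_fourier (hL2 : s * d * r * e = e * s * d * r)
    (hF2 : r * e * s * d = d * r * e * s) (hF3 : r * e * s * a = a * r * e * r⁻¹) :
    s * (d * a⁻¹ * d⁻¹) * r * e = e * s * (d * a⁻¹ * d⁻¹) * s⁻¹ :=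
  calc s * (d * a⁻¹ * d⁻¹) * r * e
      _ = s * d * a⁻¹ * d⁻¹ * (r * e * s * d) * d⁻¹ * s⁻¹ := by group
      _ = s * d * a⁻¹ * d⁻¹ * (d * r * e * s) * d⁻¹ * s⁻¹ := by rw [hF2]
      _ = s * d * a⁻¹ * (r * e * s * a) * a⁻¹ * d⁻¹ * s⁻¹ := by group
      _ = s * d * a⁻¹ * (a * r * e * r⁻¹) * a⁻¹ * d⁻¹ * s⁻¹ := by rw [hF3]
      _ = s * d * r * e * r⁻¹ * a⁻¹ * d⁻¹ * s⁻¹ := by group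
      _ = e * s * d * r * r⁻¹ * a⁻¹ * d⁻¹ * s⁻¹ := by rw [hL2]
      _ = e * s * (d * a⁻¹ * d⁻¹) * s⁻¹ := by group

theorem loop_relation_two_fourier (hL2 : s * d * r * e = e * s * d * r)
    (hL3 : s * d * r * b = b * s * d * s⁻¹) (hcomm : Commute (d * a) (r * e * b * s))
    (hL3' : s * (d * a⁻¹ * d⁻¹) * r * e = e * s * (d * a⁻¹ * d⁻¹) * s⁻¹) :
    s * (d * a⁻¹ * d⁻¹) * r * (e * b⁻¹ * e⁻¹)
      = e * b⁻¹ * e⁻¹ * s * (d * a⁻¹ * d⁻¹) * r := by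
  have hconj : e * b * (s * d * a⁻¹ * d⁻¹ * s⁻¹) = s * d * a⁻¹ * d⁻¹ * r * (e * b) :=
    calc e * b * (s * d * a⁻¹ * d⁻¹ * s⁻¹)
        _ = e * (b * s * d * s⁻¹) * s * a⁻¹ * d⁻¹ * s⁻¹ := by group
        _ = e * (s * d * r * b) * s * a⁻¹ * d⁻¹ * s⁻¹ := by rw [hL3]
        _ = e * s * d * r * b * s * a⁻¹ * d⁻¹ * s⁻¹ := by group
        _ = s * d * r * e * b * s * a⁻¹ * d⁻¹ * s⁻¹ := by rw [hL2]
        _ = s * d * ((r * e * b * s) * (d * a)⁻¹) * s⁻¹ := by group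
        _ = s * d * ((d * a)⁻¹ * (r * e * b * s)) * s⁻¹ := by rw [hcomm.inv_left.eq]
        _ = s * d * a⁻¹ * d⁻¹ * r * (e * b) := by group
  calc s * (d * a⁻¹ * d⁻¹) * r * (e * b⁻¹ * e⁻¹)
      _ = s * (d * a⁻¹ * d⁻¹) * r * e * b⁻¹ * e⁻¹ := by group
      _ = e * s * (d * a⁻¹ * d⁻¹) * s⁻¹ * b⁻¹ * e⁻¹ := by rw [hL3']
      _ = e * (e * b)⁻¹ * (e * b * (s * d * a⁻¹ * d⁻¹ * s⁻¹)) * b⁻¹ * e⁻¹ := by group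
      _ = e * (e * b)⁻¹ * (s * d * a⁻¹ * d⁻¹ * r * (e * b)) * b⁻¹ * e⁻¹ := by rw [hconj]
      _ = e * b⁻¹ * e⁻¹ * s * (d * a⁻¹ * d⁻¹) * r := by group

/-- The relations (L1)–(L3) in a group, with the involution `τ` playing the role of the flip:
`τ r` stands for `R₂₁`, and `τ a`, `τ d` for the second tensor legs `A₂`, `D₂`. -/
def LoopEdgeRelations (τ : G →* G) (r a d : G) : Prop :=
  τ r * a * r * τ a = τ a * τ r * a * r ∧
  τ r * d * r * τ d = τ d * τ r * d * r ∧
  τ r * d * r * τ a = τ a * τ r * d * (τ r)⁻¹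

theorem LoopEdgeRelations.fourier {τ : G →* G} (hτ : Function.Involutive τ)
    (h : LoopEdgeRelations τ r a d) : LoopEdgeRelations τ r d (d * a⁻¹ * d⁻¹) := by
  obtain ⟨hL1, hL2, hL3⟩ := h
  have hF1 := congrArg τ hL1
  have hF2 := congrArg τ hL2
  have hF3 := congrArg τ hL3
  simp only [map_mul, map_inv, hτ _] at hF1 hF2 hF3
  have hL3' := loop_relation_three_fourier hL2 hF2 hF3
  simp only [LoopEdgeRelations, map_mul, map_inv]
  exact ⟨hL2, loop_relation_two_fourier hL2 hL3
    (commute_mul_of_loop_relations hL3 hF1 hF2 hF3) hL3', hL3'⟩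

end GroupRelations

section KroneckerOne

variable {l n m α : Type*}

theorem Matrix.reindex_prodComm_kronecker_one [DecidableEq m] [MulZeroOneClass α]
    (X : Matrix l n α) :
    reindex (Equiv.prodComm l m) (Equiv.prodComm n m) (X ⊗ₖ (1 : Matrix m m α)) = 1 ⊗ₖ X := by
  rw [one_kronecker, kronecker_one]

variable [Fintype n] [Fintype m] [DecidableEq n] [DecidableEq m] [Semiring α]

def Matrix.kroneckerOneHom : Matrix n n α →* Matrix (n × m) (n × m) α where
  toFun X := X ⊗ₖ (1 : Matrix m m α)
  map_one' := one_kronecker_one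
  map_mul' X Y := by simp only [kronecker_one, blockDiagonal_mul]

@[simp]
theorem Matrix.kroneckerOneHom_apply (X : Matrix n n α) :
    (kroneckerOneHom X : Matrix (n × m) (n × m) α) = X ⊗ₖ 1 :=
  rfl

end KroneckerOne

theorem Rmat_mul_RmatInv {q : k} (hq : q ≠ 0) (N : ℕ) : Rmat k q N * RmatInv k q N = 1 := by
  ext ⟨i, j⟩ ⟨s, t⟩
  simp only [Rmat, RmatInv, mul_apply, one_apply, of_apply, Fintype.sum_prod_type, Prod.mk.injEq,
    add_mul, mul_sub, ite_mul, mul_ite, one_mul, mul_one, zero_mul, mul_zero, ite_and]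
  simp only [Finset.sum_sub_distrib, Finset.sum_ite_eq', Finset.mem_univ, if_true,
    Finset.sum_ite_irrel, Finset.sum_const_zero]
  split_ifs <;> first | omega | (simp_all; try field_simp)

theorem RA_mul_RAinv {q : k} (hq : q ≠ 0) (N : ℕ) : RA k 𝒜 q N * RAinv k 𝒜 q N = 1 := by
  rw [RA, RAinv, ← Matrix.map_mul, Rmat_mul_RmatInv k hq, Matrix.map_one _ (map_zero _) (map_one _)]

theorem RAinv_mul_RA {q : k} (hq : q ≠ 0) (N : ℕ) : RAinv k 𝒜 q N * RA k 𝒜 q N = 1 := by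
  rw [RA, RAinv, ← Matrix.map_mul, mul_eq_one_comm.1 (Rmat_mul_RmatInv k hq N),
    Matrix.map_one _ (map_zero _) (map_one _)]

theorem reindex_prodComm_RA (q : k) (N : ℕ) :
    reindex (Equiv.prodComm _ _) (Equiv.prodComm _ _) (RA k 𝒜 q N) = RA21 k 𝒜 q N :=
  rfl

theorem reindex_prodComm_RAinv (q : k) (N : ℕ) :
    reindex (Equiv.prodComm _ _) (Equiv.prodComm _ _) (RAinv k 𝒜 q N) = RAinv21 k 𝒜 q N :=
  rfl

def RAUnit {q : k} (hq : q ≠ 0) (N : ℕ) : (Matrix (Fin N × Fin N) (Fin N × Fin N) 𝒜)ˣ :=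
  ⟨RA k 𝒜 q N, RAinv k 𝒜 q N, RA_mul_RAinv k 𝒜 hq N, RAinv_mul_RA k 𝒜 hq N⟩

def flipUnits (N : ℕ) :
    (Matrix (Fin N × Fin N) (Fin N × Fin N) 𝒜)ˣ →* (Matrix (Fin N × Fin N) (Fin N × Fin N) 𝒜)ˣ :=
  Units.map (reindexRingEquiv 𝒜 (Equiv.prodComm (Fin N) (Fin N)) :
    Matrix (Fin N × Fin N) (Fin N × Fin N) 𝒜 →* Matrix (Fin N × Fin N) (Fin N × Fin N) 𝒜)

theorem flipUnits_involutive (N : ℕ) : Function.Involutive (flipUnits 𝒜 N) :=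
  fun _ => Units.ext rfl

theorem loopRel_iff_loopEdgeRelations {q : k} (hq : q ≠ 0) {N : ℕ}
    (A D : (Matrix (Fin N) (Fin N) 𝒜)ˣ) :
    LoopRel k 𝒜 q (A : Matrix (Fin N) (Fin N) 𝒜) D ↔
      LoopEdgeRelations (flipUnits 𝒜 N) (RAUnit k 𝒜 hq N)
        (Units.map kroneckerOneHom A) (Units.map kroneckerOneHom D) := by
  simp only [LoopRel, LoopEdgeRelations, Units.ext_iff, Units.val_mul, flipUnits, Units.coe_map,
    Units.coe_map_inv, MonoidHom.coe_coe, coe_reindexRingEquiv, RAUnit, Units.inv_mk,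
    kroneckerOneHom_apply, reindex_prodComm_kronecker_one, reindex_prodComm_RA,
    reindex_prodComm_RAinv]

/-- Let `A, D` be N × N matrices over `𝒜` satisfying the defining
relations (L1), (L2), (L3) of the quantized loop edge algebra `𝒟_q(e)` at a vertex of
dimension `N`, and suppose `A` and `D` are invertible in `Mat_N(𝒜)` (with two-sided
inverses `Ai`, `Di`).  Then the pair `A' := D`, `D' := D A⁻¹ D⁻¹` again satisfies the
defining relations of the quantized loop edge algebra.  (This is the content of the
q-Fourier transform `ℱ : 𝒟_q(e)° → 𝒟_q(e)°`, `A ↦ D`, `D ↦ D A⁻¹ D⁻¹`, for a loop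
edge.) -/
theorem loop_fourier_transform (q : k) (hq : q ≠ 0) {N : ℕ}
    (A D Ai Di : Matrix (Fin N) (Fin N) 𝒜)
    (hrel : LoopRel k 𝒜 q A D)
    (hA₁ : A * Ai = 1) (hA₂ : Ai * A = 1)
    (hD₁ : D * Di = 1) (hD₂ : Di * D = 1) :
    LoopRel k 𝒜 q D (D * Ai * Di) := by
  let α : (Matrix (Fin N) (Fin N) 𝒜)ˣ := ⟨A, Ai, hA₁, hA₂⟩
  let δ : (Matrix (Fin N) (Fin N) 𝒜)ˣ := ⟨D, Di, hD₁, hD₂⟩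
  have h := ((loopRel_iff_loopEdgeRelations k 𝒜 hq α δ).1 hrel).fourier (flipUnits_involutive 𝒜 N)
  rw [← map_inv, ← map_inv, ← map_mul, ← map_mul] at h
  exact (loopRel_iff_loopEdgeRelations k 𝒜 hq δ (δ * α⁻¹ * δ⁻¹)).2 h
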